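/- arXiv:1009.4311 — 5 statements merged into one kernel-verified Lean document; each statement's English description precedes it below -/
import Mathlib

section
/- Let A be a real n×n matrix that is Metzler and nilpotent, and let α > 0, β > 0. Then for every t ≥ 0 the Mittag-Leffler matrix function E_{α,β}(A t^α) = Σ_{ℓ=0}^∞ t^{αℓ} A^ℓ / Γ(αℓ + β) is entrywise nonnegative. -/
/-!
For a Metzler matrix every product `A i j * A j i` is nonnegative (for `i ≠ j` both factors
are), and these products sum to `trace (A * A)`, which vanishes when `A` is nilpotent. Hence all
of them vanish, in particular `A i i ^ 2`, so a nilpotent Metzler matrix is entrywise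
nonnegative. Its Mittag-Leffler series is then a finite sum of entrywise nonnegative powers of
`A` with coefficients `t ^ (α ℓ) / Γ(α ℓ + β) ≥ 0`.
-/

/-- A real `n × n` matrix is *Metzler* if all of its off-diagonal entries are nonnegative. -/
def Matrix.IsMetzler {n : ℕ} (A : Matrix (Fin n) (Fin n) ℝ) : Prop :=
  ∀ i j : Fin n, i ≠ j → 0 ≤ A i j

theorem tsum_smul_pow_eq_sum_range_of_pow_eq_zero {R M : Type*} [Semiring M] [TopologicalSpace M]
    [SMulZeroClass R M] (c : ℕ → R) {x : M} {N : ℕ}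
    (hN : x ^ N = 0) : ∑' ℓ, c ℓ • x ^ ℓ = ∑ ℓ ∈ Finset.range N, c ℓ • x ^ ℓ :=
  tsum_eq_sum fun ℓ hℓ => by
    rw [pow_eq_zero_of_le (by simpa using hℓ) hN, smul_zero]

namespace Matrix.IsMetzler

variable {n : ℕ} {A : Matrix (Fin n) (Fin n) ℝ}

theorem mul_apply_swap_nonneg (hA : A.IsMetzler) (i j : Fin n) : 0 ≤ A i j * A j i := by
  rcases eq_or_ne i j with rfl | hij
  · exact mul_self_nonneg _
  · exact mul_nonneg (hA i j hij) (hA j i hij.symm)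

theorem diag_eq_zero_of_isNilpotent (hA : A.IsMetzler) (hnil : IsNilpotent A) (i : Fin n) :
    A i i = 0 := by
  have htrace : ∑ i, ∑ j, A i j * A j i = 0 := by
    have : IsNilpotent (A * A) := by simpa [sq] using hnil.pow_of_pos two_ne_zero
    simpa only [trace, diag, mul_apply] using (isNilpotent_trace_of_isNilpotent this).eq_zero
  have hrow : ∑ j, A i j * A j i = 0 :=
    (Finset.sum_eq_zero_iff_of_nonneg fun i _ => Finset.sum_nonneg fun j _ =>
      hA.mul_apply_swap_nonneg i j).mp htrace i (Finset.mem_univ i)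
  exact mul_self_eq_zero.mp <|
    (Finset.sum_eq_zero_iff_of_nonneg fun j _ => hA.mul_apply_swap_nonneg i j).mp hrow i
      (Finset.mem_univ i)

theorem nonneg_of_isNilpotent (hA : A.IsMetzler) (hnil : IsNilpotent A) (i j : Fin n) :
    0 ≤ A i j := by
  rcases eq_or_ne i j with rfl | hij
  · exact (hA.diag_eq_zero_of_isNilpotent hnil i).ge
  · exact hA i j hij

end Matrix.IsMetzler

/-- If `A` is a real `n × n` Metzler nilpotent matrix and `α > 0`, `β > 0`,
then for every `t ≥ 0` the Mittag-Leffler matrix function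
`E_{α,β}(A t^α) = Σ_{ℓ} (t^(αℓ) / Γ(αℓ + β)) • A^ℓ` is entrywise nonnegative. -/
theorem mittagLeffler_nonneg_of_metzler_nilpotent {n : ℕ} (A : Matrix (Fin n) (Fin n) ℝ)
    (hA : A.IsMetzler) (hnil : IsNilpotent A) (α β : ℝ) (hα : 0 < α) (hβ : 0 < β)
    (t : ℝ) (ht : 0 ≤ t) :
    ∀ i j : Fin n,
      0 ≤ (∑' ℓ : ℕ, (t ^ (α * ℓ) / Real.Gamma (α * ℓ + β)) • A ^ ℓ) i j := by
  intro i j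
  have hcoeff (ℓ : ℕ) : 0 ≤ t ^ (α * ℓ) / Real.Gamma (α * ℓ + β) :=
    div_nonneg (Real.rpow_nonneg ht _) (Real.Gamma_pos_of_pos (by positivity)).le
  obtain ⟨N, hN⟩ := hnil
  rw [tsum_smul_pow_eq_sum_range_of_pow_eq_zero _ hN, Matrix.sum_apply]
  exact Finset.sum_nonneg fun ℓ _ => mul_nonneg (hcoeff ℓ)
    (Matrix.pow_apply_nonneg (hA.nonneg_of_isNilpotent ⟨N, hN⟩) ℓ i j)
end

section
/- Let A be a real n×n Metzler matrix and let α > 0, β > 0. Then there exists t̄ > 0 such that for every t ∈ [0, t̄) the Mittag-Leffler matrix function E_{α,β}(A t^α) = Σ_{ℓ=0}^∞ t^{αℓ} A^ℓ / Γ(αℓ + β) is entrywise nonnegative. -/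
/-!
Put `s = t ^ α`. The `(i, j)` entry of `E_{α,β}(A t^α)` is the power series
`∑ ℓ, (A ^ ℓ) i j / Γ(α ℓ + β) * s ^ ℓ`, which has a positive radius of convergence since `1 / Γ`
is eventually at most `1` along `α ℓ + β`. If its first nonzero coefficient, of index `m`, is
positive, the series equals `s ^ m` times a function continuous at `0` with positive value there,
so it is nonnegative for small `s ≥ 0`. For a Metzler matrix `A` this holds: `A + c • 1` is
entrywise nonnegative for large `c`, and in the binomial expansion of `((A + c • 1) ^ m) i j` all
terms but `(A ^ m) i j` involve lower powers of `A`, whose `(i, j)` entries vanish.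
-/

open Filter Topology

section PowerSeries

variable {a : ℕ → ℝ} {r : ℝ}

lemma summable_mul_pow_of_abs_le (ha : Summable fun ℓ => |a ℓ| * r ^ ℓ) {s : ℝ} (hs : |s| ≤ r) :
    Summable fun ℓ => a ℓ * s ^ ℓ :=
  ha.of_norm_bounded fun ℓ => by
    rw [Real.norm_eq_abs, abs_mul, abs_pow]
    gcongr

lemma summable_abs_mul_pow_nat_add (hr : 0 < r) (ha : Summable fun ℓ => |a ℓ| * r ^ ℓ) (m : ℕ) :
    Summable fun ℓ => |a (ℓ + m)| * r ^ ℓ := by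
  refine (((summable_nat_add_iff m).2 ha).div_const (r ^ m)).congr fun ℓ => ?_
  rw [pow_add, ← mul_assoc, mul_div_cancel_right₀ _ (pow_ne_zero m hr.ne')]

lemma continuousAt_tsum_mul_pow (ha : Summable fun ℓ => |a ℓ| * r ^ ℓ) (hr : 0 < r) :
    ContinuousAt (fun s => ∑' ℓ, a ℓ * s ^ ℓ) 0 :=
  (continuousOn_tsum (f := fun ℓ s => a ℓ * s ^ ℓ) (fun ℓ => by fun_prop) ha
    fun ℓ s hs => by
      rw [Real.norm_eq_abs, abs_mul, abs_pow]
      gcongr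
      exact abs_le.2 hs).continuousAt (Icc_mem_nhds (neg_lt_zero.2 hr) hr)

lemma tsum_mul_pow_eq_pow_mul_tsum_nat_add (ha : Summable fun ℓ => |a ℓ| * r ^ ℓ) {s : ℝ}
    (hs : |s| ≤ r) {m : ℕ} (hzero : ∀ ℓ < m, a ℓ = 0) :
    ∑' ℓ, a ℓ * s ^ ℓ = s ^ m * ∑' ℓ, a (ℓ + m) * s ^ ℓ := by
  rw [← (summable_mul_pow_of_abs_le ha hs).sum_add_tsum_nat_add m,
    Finset.sum_eq_zero fun ℓ hℓ => by rw [hzero ℓ (Finset.mem_range.1 hℓ), zero_mul],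
    zero_add, ← tsum_mul_left]
  congr 1 with ℓ
  ring

theorem eventually_nonneg_tsum_mul_pow (hr : 0 < r) (ha : Summable fun ℓ => |a ℓ| * r ^ ℓ)
    (hlead : ∀ m, (∀ ℓ < m, a ℓ = 0) → 0 ≤ a m) :
    ∀ᶠ s in 𝓝[≥] 0, 0 ≤ ∑' ℓ, a ℓ * s ^ ℓ := by
  classical
  by_cases hzero : ∃ ℓ, a ℓ ≠ 0
  swap
  · simp only [not_exists, not_not] at hzero
    simp [hzero]
  set m := Nat.find hzero
  have hbelow : ∀ ℓ < m, a ℓ = 0 := fun ℓ hℓ => not_not.1 (Nat.find_min hzero hℓ)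
  have hm : 0 < a m := (hlead m hbelow).lt_of_ne' (Nat.find_spec hzero)
  have hg0 : ∑' ℓ, a (ℓ + m) * (0 : ℝ) ^ ℓ = a m := by
    rw [tsum_eq_single 0 fun ℓ hℓ => by rw [zero_pow hℓ, mul_zero]]
    simp
  have hg : ∀ᶠ s in 𝓝 0, 0 < ∑' ℓ, a (ℓ + m) * s ^ ℓ :=
    (hg0 ▸ (continuousAt_tsum_mul_pow (summable_abs_mul_pow_nat_add hr ha m) hr).tendsto)
      |>.eventually_const_lt hm
  have hs : ∀ᶠ s in 𝓝 (0 : ℝ), |s| ≤ r :=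
    mem_of_superset (Icc_mem_nhds (neg_lt_zero.2 hr) hr) fun s hs => abs_le.2 hs
  filter_upwards [nhdsWithin_le_nhds hg, nhdsWithin_le_nhds hs, self_mem_nhdsWithin]
    with s hgs hsr (hs0 : 0 ≤ s)
  rw [tsum_mul_pow_eq_pow_mul_tsum_nat_add ha hsr hbelow]
  exact mul_nonneg (pow_nonneg hs0 m) hgs.le

lemma exists_pos_summable_abs_mul_pow {K : ℝ} (hK : 0 < K) (ha : ∀ᶠ ℓ in atTop, |a ℓ| ≤ K ^ ℓ) :
    ∃ r > 0, Summable fun ℓ => |a ℓ| * r ^ ℓ := by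
  refine ⟨(2 * K)⁻¹, by positivity, .of_norm_bounded_eventually_nat summable_geometric_two ?_⟩
  filter_upwards [ha] with ℓ hℓ
  calc ‖|a ℓ| * (2 * K)⁻¹ ^ ℓ‖ = |a ℓ| * (2 * K)⁻¹ ^ ℓ := by
        rw [Real.norm_of_nonneg (by positivity)]
    _ ≤ K ^ ℓ * (2 * K)⁻¹ ^ ℓ := by gcongr
    _ = (1 / 2) ^ ℓ := by rw [← mul_pow]; field_simp

end PowerSeries

lemma Real.eventually_one_le_Gamma_mul_add {α : ℝ} (hα : 0 < α) (β : ℝ) :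
    ∀ᶠ ℓ : ℕ in atTop, 1 ≤ Real.Gamma (α * ℓ + β) := by
  have h : Tendsto (fun ℓ : ℕ => α * ℓ + β) atTop atTop :=
    tendsto_atTop_add_const_right _ β (tendsto_natCast_atTop_atTop.const_mul_atTop hα)
  filter_upwards [h.eventually_ge_atTop 2] with ℓ hℓ
  rw [← Real.Gamma_two]
  exact Real.Gamma_strictMonoOn_Ici.monotoneOn Set.self_mem_Ici hℓ hℓ

lemma Real.tendsto_rpow_nhdsGE_zero {α : ℝ} (hα : 0 < α) :
    Tendsto (fun t : ℝ => t ^ α) (𝓝[≥] 0) (𝓝[≥] 0) := by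
  refine tendsto_nhdsWithin_of_tendsto_nhds_of_eventually_within _ ?_
    (eventually_nhdsWithin_of_forall fun t ht => Real.rpow_nonneg ht α)
  simpa [Real.zero_rpow hα.ne'] using
    (Real.continuousAt_rpow_const 0 α (Or.inr hα.le)).tendsto.mono_left nhdsWithin_le_nhds

namespace Matrix

lemma tsum_apply_of_summable_apply {ι m n : Type*} {f : ι → Matrix m n ℝ}
    (hf : ∀ i j, Summable fun x => f x i j) (i : m) (j : n) :
    (∑' x, f x) i j = ∑' x, f x i j := by
  have : Summable f := Pi.summable.2 fun i => Pi.summable.2 (hf i)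
  exact (congrFun (tsum_apply this) j).trans (tsum_apply (Pi.summable.1 this i))

section LinftyOpNorm

attribute [local instance] Matrix.linftyOpNormedRing

variable {m : Type*} [Fintype m] [DecidableEq m]

lemma abs_apply_le_linfty_opNorm (M : Matrix m m ℝ) (i j : m) : |M i j| ≤ ‖M‖ :=
  (PiLp.norm_apply_le (WithLp.toLp 1 (M i)) j).trans
    (norm_le_pi_norm (fun i => WithLp.toLp 1 (M i)) i)

lemma exists_abs_pow_apply_le (A : Matrix m m ℝ) :
    ∃ K > 0, ∀ ℓ : ℕ, ∀ i j, |(A ^ ℓ) i j| ≤ K ^ ℓ := by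
  refine ⟨‖A‖ + 1, by positivity, fun ℓ i j => ?_⟩
  rcases ℓ.eq_zero_or_pos with rfl | hℓ
  · rw [pow_zero, pow_zero, one_apply]
    split_ifs <;> simp
  calc |(A ^ ℓ) i j| ≤ ‖A ^ ℓ‖ := abs_apply_le_linfty_opNorm _ i j
    _ ≤ ‖A‖ ^ ℓ := norm_pow_le' A hℓ
    _ ≤ (‖A‖ + 1) ^ ℓ := by gcongr; linarith

end LinftyOpNorm

lemma exists_pos_summable_abs_pow_apply_div_Gamma {m : Type*} [Fintype m] [DecidableEq m]
    (A : Matrix m m ℝ) {α : ℝ} (hα : 0 < α) (β : ℝ) (i j : m) :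
    ∃ r > 0, Summable fun ℓ : ℕ => |(A ^ ℓ) i j / Real.Gamma (α * ℓ + β)| * r ^ ℓ := by
  obtain ⟨K, hK, hAK⟩ := A.exists_abs_pow_apply_le
  refine exists_pos_summable_abs_mul_pow hK ?_
  filter_upwards [Real.eventually_one_le_Gamma_mul_add hα β] with ℓ hℓ
  rw [abs_div, abs_of_pos (zero_lt_one.trans_le hℓ)]
  exact (div_le_self (abs_nonneg _) hℓ).trans (hAK ℓ i j)

variable {n : ℕ} {A : Matrix (Fin n) (Fin n) ℝ}

lemma IsMetzler.exists_nonneg_add_smul_one (hA : A.IsMetzler) :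
    ∃ c : ℝ, ∀ i j, 0 ≤ (A + c • 1) i j := by
  refine ⟨∑ k, |A k k|, fun i j => ?_⟩
  rcases eq_or_ne i j with rfl | hij
  · have : |A i i| ≤ ∑ k, |A k k| :=
      Finset.single_le_sum (f := fun k => |A k k|) (fun k _ => abs_nonneg _) (Finset.mem_univ i)
    simp only [add_apply, smul_apply, one_apply_eq, smul_eq_mul, mul_one]
    linarith [neg_abs_le (A i i)]
  · simpa [one_apply_ne hij] using hA i j hij

theorem IsMetzler.pow_apply_nonneg_of_forall_lt_eq_zero (hA : A.IsMetzler) {i j : Fin n}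
    {m : ℕ} (h : ∀ ℓ < m, (A ^ ℓ) i j = 0) : 0 ≤ (A ^ m) i j := by
  obtain ⟨c, hc⟩ := hA.exists_nonneg_add_smul_one
  have hexp : ((A + c • 1) ^ m) i j = (A ^ m) i j := by
    rw [((Commute.one_right A).smul_right c).add_pow, Finset.sum_range_succ, add_apply, sum_apply,
      Finset.sum_eq_zero fun ℓ hℓ => ?_]
    · simp
    · simp [smul_pow, h ℓ (Finset.mem_range.1 hℓ), ← nsmul_eq_mul']
  exact hexp ▸ pow_apply_nonneg hc m i j

theorem IsMetzler.eventually_summable_and_nonneg_tsum_pow_apply_div_Gamma (hA : A.IsMetzler)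
    {α β : ℝ} (hα : 0 < α) (hβ : 0 < β) :
    ∀ᶠ s in 𝓝[≥] (0 : ℝ), ∀ i j,
      (Summable fun ℓ : ℕ => (A ^ ℓ) i j / Real.Gamma (α * ℓ + β) * s ^ ℓ) ∧
        0 ≤ ∑' ℓ : ℕ, (A ^ ℓ) i j / Real.Gamma (α * ℓ + β) * s ^ ℓ := by
  refine eventually_all.2 fun i => eventually_all.2 fun j => ?_
  have hΓ (ℓ : ℕ) : 0 < Real.Gamma (α * ℓ + β) := Real.Gamma_pos_of_pos (by positivity)
  obtain ⟨r, hr, hsum⟩ := A.exists_pos_summable_abs_pow_apply_div_Gamma hα β i j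
  have hlead (m : ℕ) (h : ∀ ℓ < m, (A ^ ℓ) i j / Real.Gamma (α * ℓ + β) = 0) :
      0 ≤ (A ^ m) i j / Real.Gamma (α * m + β) :=
    div_nonneg (hA.pow_apply_nonneg_of_forall_lt_eq_zero fun ℓ hℓ =>
      (div_eq_zero_iff.1 (h ℓ hℓ)).resolve_right (hΓ ℓ).ne') (hΓ m).le
  filter_upwards [eventually_nonneg_tsum_mul_pow hr hsum hlead,
    nhdsWithin_le_nhds (Icc_mem_nhds (neg_lt_zero.2 hr) hr)] with s hs hsr
  exact ⟨summable_mul_pow_of_abs_le hsum (abs_le.2 hsr), hs⟩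

end Matrix

/-- If `A` is a real `n × n` Metzler matrix and `α > 0`, `β > 0`, then there
exists `t̄ > 0` such that for every `t ∈ [0, t̄)` the Mittag-Leffler matrix function
`E_{α,β}(A t^α) = Σ_{ℓ} (t^(αℓ) / Γ(αℓ + β)) • A^ℓ` is entrywise nonnegative. -/
theorem mittagLeffler_nonneg_on_initial_interval {n : ℕ} (A : Matrix (Fin n) (Fin n) ℝ)
    (hA : A.IsMetzler) (α β : ℝ) (hα : 0 < α) (hβ : 0 < β) :
    ∃ tbar : ℝ, 0 < tbar ∧ ∀ t : ℝ, 0 ≤ t → t < tbar → ∀ i j : Fin n,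
      0 ≤ (∑' ℓ : ℕ, (t ^ (α * ℓ) / Real.Gamma (α * ℓ + β)) • A ^ ℓ) i j := by
  obtain ⟨tbar, htbar, h⟩ := (nhdsGE_basis (0 : ℝ)).eventually_iff.1
    ((Real.tendsto_rpow_nhdsGE_zero hα).eventually
      (hA.eventually_summable_and_nonneg_tsum_pow_apply_div_Gamma hα hβ))
  refine ⟨tbar, htbar, fun t ht0 ht i j => ?_⟩
  have hentry (i j : Fin n) (ℓ : ℕ) : ((t ^ (α * ℓ) / Real.Gamma (α * ℓ + β)) • A ^ ℓ) i j =
      (A ^ ℓ) i j / Real.Gamma (α * ℓ + β) * (t ^ α) ^ ℓ := by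
    rw [Matrix.smul_apply, smul_eq_mul, Real.rpow_mul ht0, Real.rpow_natCast]
    ring
  have hsum (i j : Fin n) :
      Summable fun ℓ : ℕ => ((t ^ (α * ℓ) / Real.Gamma (α * ℓ + β)) • A ^ ℓ) i j := by
    simpa only [hentry] using (h ⟨ht0, ht⟩ i j).1
  rw [Matrix.tsum_apply_of_summable_apply hsum, tsum_congr (hentry i j)]
  exact (h ⟨ht0, ht⟩ i j).2
end

section
/- Consider the linear time-invariant delay system with delays 0 = h₀ < h₁ < ⋯ < h_p = h, matrices A₀, …, A_p ∈ ℝ^{n×n} and B ∈ ℝ^{n×m}. Assume A₀ is Metzler, A₁, …, A_p are entrywise nonnegative, and B is entrywise nonnegative. Let φ : [−h, 0] → ℝⁿ be continuous with φ(t) ≥ 0 componentwise for all t ∈ [−h, 0], let u : [0, ∞) → ℝ^m be continuous with u(t) ≥ 0 componentwise for all t ≥ 0, and let x be a solution of the delay system with initial function φ and input u. Then x(t) ≥ 0 componentwise for every t ≥ 0. -/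
/-!
Compare `x` with the barrier `-ε e^{Mt}`, where `M` exceeds every row sum
`Lₖ = ∑ᵢ ∑ⱼ |(Aᵢ)ₖⱼ|`. Let `T > 0` be the first time at which some component `x_k` touches
the barrier. Every delayed value `x_j(T - hᵢ)` lies above `-ε e^{MT}`, and the only coefficient
that may be negative, `(A₀)ₖₖ`, multiplies `x_k(T) = -ε e^{MT}` itself, so
`ẋ_k(T) ≥ -Lₖ ε e^{MT}`. Then `x_k + ε e^{Mt}` has derivative at least `(M - Lₖ) ε e^{MT} > 0`
at `T`, where it attains its minimum over `[0, T]`: impossible. Letting `ε → 0` gives `x ≥ 0`.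
-/

open Matrix intervalIntegral

/-- `IsDelaySolution hd A B φ u x` : `x : [-h, ∞) → ℝⁿ` is a solution of the delay system
`ẋ(t) = Σ_{i=0}^p A_i x(t - h_i) + B u(t)` with delays `hd 0 < hd 1 < ⋯ < hd p = h`,
initial function `φ` on `[-h, 0]` and input `u`, in the integrated (mild) sense. -/
def IsDelaySolution {n m p : ℕ} (hd : Fin (p + 1) → ℝ)
    (A : Fin (p + 1) → Matrix (Fin n) (Fin n) ℝ) (B : Matrix (Fin n) (Fin m) ℝ)
    (φ : ℝ → Fin n → ℝ) (u : ℝ → Fin m → ℝ) (x : ℝ → Fin n → ℝ) : Prop :=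
  ContinuousOn x (Set.Ici (-(hd (Fin.last p)))) ∧
    (∀ s ∈ Set.Icc (-(hd (Fin.last p))) 0, x s = φ s) ∧
    ∀ t : ℝ, 0 ≤ t →
      x t = x 0 + ∫ τ in (0 : ℝ)..t,
        ((∑ i : Fin (p + 1), (A i) *ᵥ x (τ - hd i)) + B *ᵥ u τ)

open Set Finset Real

lemma exists_first_zero_of_continuousOn {ι : Type*} [Finite ι] {F : ι → ℝ → ℝ} {a t : ℝ}
    {k : ι} (hF : ∀ j, ContinuousOn (F j) (Ici a)) (ha : ∀ j, 0 < F j a) (hat : a ≤ t)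
    (hkt : F k t ≤ 0) :
    ∃ T, a < T ∧ ∃ k, F k T = 0 ∧ ∀ j, ∀ s ∈ Icc a T, 0 ≤ F j s := by
  set bad := {s ∈ Ici a | ∃ j, F j s ≤ 0}
  have hbad : IsClosed bad := by
    have : bad = ⋃ j, Ici a ∩ F j ⁻¹' Iic 0 := by
      ext s
      simp only [bad, Set.mem_ofPred_eq, mem_iUnion, Set.mem_inter_iff, Set.mem_preimage,
        Set.mem_Iic]
      exact ⟨fun ⟨hs, j, hj⟩ => ⟨j, hs, hj⟩, fun ⟨j, hs, hj⟩ => ⟨hs, j, hj⟩⟩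
    rw [this]
    exact isClosed_iUnion_of_finite fun j =>
      (hF j).preimage_isClosed_of_isClosed isClosed_Ici isClosed_Iic
  have hbdd : BddBelow bad := ⟨a, fun s hs => hs.1⟩
  obtain ⟨haT, k, hkT⟩ : sInf bad ∈ bad := hbad.csInf_mem ⟨t, hat, k, hkt⟩ hbdd
  set T := sInf bad
  have hT : a < T := (mem_Ici.1 haT).lt_of_ne fun h => (ha k).not_ge (h ▸ hkT)
  have hpos : ∀ j, ∀ s ∈ Ico a T, 0 < F j s := fun j s hs =>
    not_le.1 fun h => (csInf_le hbdd ⟨hs.1, j, h⟩).not_gt hs.2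
  have hnonneg : ∀ j, ∀ s ∈ Icc a T, 0 ≤ F j s := by
    intro j
    have hsub : Ico a T ⊆ Icc a T ∩ F j ⁻¹' Ici 0 := fun s hs =>
      ⟨Ico_subset_Icc_self hs, (hpos j s hs).le⟩
    have := closure_minimal hsub
      (((hF j).mono Icc_subset_Ici_self).preimage_isClosed_of_isClosed isClosed_Icc isClosed_Ici)
    rw [closure_Ico hT.ne] at this
    exact fun s hs => (this hs).2
  exact ⟨T, hT, k, le_antisymm hkT (hnonneg k T ⟨haT, le_rfl⟩), hnonneg⟩

lemma HasDerivAt.nonpos_of_isMinOn_Icc {f : ℝ → ℝ} {f' a b : ℝ} (hf : HasDerivAt f f' b)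
    (hab : a < b) (hmin : IsMinOn f (Icc a b) b) : f' ≤ 0 := by
  have hcone : a - b ∈ posTangentConeAt (Icc a b) b :=
    sub_mem_posTangentConeAt_of_segment_subset (by rw [segment_symm, segment_eq_Icc hab.le])
  have := hmin.localize.hasFDerivWithinAt_nonneg hf.hasFDerivAt.hasFDerivWithinAt hcone
  simp only [ContinuousLinearMap.toSpanSingleton_apply, smul_eq_mul] at this
  nlinarith

lemma hasDerivAt_of_eq_add_integral {E : Type*} [NormedAddCommGroup E] [NormedSpace ℝ E]
    [CompleteSpace E] {x g : ℝ → E} {a T : ℝ} (hg : ContinuousOn g (Ici a))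
    (hx : ∀ t, a ≤ t → x t = x a + ∫ τ in a..t, g τ) (hT : a < T) : HasDerivAt x (g T) T := by
  have hint : HasDerivAt (fun t => x a + ∫ τ in a..t, g τ) (g T) T :=
    (integral_hasDerivAt_right ((hg.mono Icc_subset_Ici_self).intervalIntegrable_of_Icc hT.le)
      ((hg.mono Ioi_subset_Ici_self).stronglyMeasurableAtFilter isOpen_Ioi T hT)
      (hg.continuousAt (Ici_mem_nhds hT))).const_add (x a)
  exact hint.congr_of_eventuallyEq ((eventually_ge_nhds hT).mono hx)

lemma neg_mul_sum_abs_le_mulVec_apply_of_nonneg {ι κ : Type*} [Fintype κ] {A : Matrix ι κ ℝ}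
    {v : κ → ℝ} {r : ℝ} {k : ι} (hA : ∀ j, 0 ≤ A k j) (hv : ∀ j, -r ≤ v j) :
    -(r * ∑ j, |A k j|) ≤ (A *ᵥ v) k := by
  simp only [mulVec, dotProduct, mul_sum, ← sum_neg_distrib]
  refine sum_le_sum fun j _ => ?_
  rw [abs_of_nonneg (hA j)]
  nlinarith [mul_le_mul_of_nonneg_left (hv j) (hA j)]

lemma Matrix.IsMetzler.neg_mul_sum_abs_le_mulVec_apply {n : ℕ} {A : Matrix (Fin n) (Fin n) ℝ}
    (hA : A.IsMetzler) {v : Fin n → ℝ} {r : ℝ} {k : Fin n} (hv : ∀ j, -r ≤ v j)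
    (hvk : v k ≤ r) :
    -(r * ∑ j, |A k j|) ≤ (A *ᵥ v) k := by
  simp only [mulVec, dotProduct, mul_sum, ← sum_neg_distrib]
  refine sum_le_sum fun j _ => ?_
  rcases eq_or_ne j k with rfl | hjk
  · calc -(r * |A j j|) ≤ -(|A j j| * |v j|) := by
          nlinarith [abs_le.2 ⟨hv j, hvk⟩, abs_nonneg (A j j)]
      _ = -|A j j * v j| := by rw [abs_mul]
      _ ≤ A j j * v j := neg_abs_le _
  · rw [abs_of_nonneg (hA k j hjk.symm)]
    nlinarith [mul_le_mul_of_nonneg_left (hv j) (hA k j hjk.symm)]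

def delayField {n m p : ℕ} (hd : Fin (p + 1) → ℝ)
    (A : Fin (p + 1) → Matrix (Fin n) (Fin n) ℝ) (B : Matrix (Fin n) (Fin m) ℝ)
    (u : ℝ → Fin m → ℝ) (x : ℝ → Fin n → ℝ) (τ : ℝ) : Fin n → ℝ :=
  ∑ i, A i *ᵥ x (τ - hd i) + B *ᵥ u τ

section DelaySystem

variable {n m p : ℕ} {hd : Fin (p + 1) → ℝ} {A : Fin (p + 1) → Matrix (Fin n) (Fin n) ℝ}
  {B : Matrix (Fin n) (Fin m) ℝ} {u : ℝ → Fin m → ℝ} {x : ℝ → Fin n → ℝ}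

lemma continuousOn_delayField {h : ℝ} (hd_le : ∀ i, hd i ≤ h)
    (hx : ContinuousOn x (Ici (-h))) (hu : ContinuousOn u (Ici 0)) :
    ContinuousOn (delayField hd A B u x) (Ici 0) := by
  refine (continuousOn_finsetSum _ fun i _ => ?_).add ?_
  · refine (continuous_const.matrix_mulVec continuous_id).comp_continuousOn
      (hx.comp (continuous_sub_right _).continuousOn fun τ hτ => ?_)
    simp only [Set.mem_Ici] at hτ ⊢
    linarith [hd_le i]
  · exact (continuous_const.matrix_mulVec continuous_id).comp_continuousOn hu

lemma neg_mul_le_delayField_apply (hd0 : hd 0 = 0) (hA0 : (A 0).IsMetzler)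
    (hAi : ∀ i : Fin (p + 1), i ≠ 0 → ∀ k j : Fin n, 0 ≤ A i k j) (hB : ∀ k j, 0 ≤ B k j)
    {τ r : ℝ} (hu : ∀ j, 0 ≤ u τ j) (hx : ∀ i j, -r ≤ x (τ - hd i) j) {k : Fin n}
    (hxk : x τ k ≤ r) : -(r * ∑ i, ∑ j, |A i k j|) ≤ delayField hd A B u x τ k := by
  have hBu : 0 ≤ (B *ᵥ u τ) k := dotProduct_nonneg_of_nonneg (hB k) hu
  have hAx : ∀ i, -(r * ∑ j, |A i k j|) ≤ (A i *ᵥ x (τ - hd i)) k := by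
    intro i
    rcases eq_or_ne i 0 with rfl | hi
    · have hx0 := hx 0
      simp only [hd0, sub_zero] at hx0 ⊢
      exact hA0.neg_mul_sum_abs_le_mulVec_apply hx0 hxk
    · exact neg_mul_sum_abs_le_mulVec_apply_of_nonneg (hAi i hi k) (hx i)
  calc -(r * ∑ i, ∑ j, |A i k j|) = ∑ i, -(r * ∑ j, |A i k j|) := by
        rw [mul_sum, sum_neg_distrib]
    _ ≤ ∑ i, (A i *ᵥ x (τ - hd i)) k := sum_le_sum fun i _ => hAx i
    _ ≤ delayField hd A B u x τ k := by
        simp only [delayField, Pi.add_apply, Finset.sum_apply]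
        linarith

theorem IsDelaySolution.neg_mul_exp_lt_apply {φ : ℝ → Fin n → ℝ}
    (hx : IsDelaySolution hd A B φ u x) (hd0 : hd 0 = 0) (hmono : Monotone hd)
    (hA0 : (A 0).IsMetzler) (hAi : ∀ i : Fin (p + 1), i ≠ 0 → ∀ k j : Fin n, 0 ≤ A i k j)
    (hB : ∀ k j, 0 ≤ B k j) (hφ : ∀ s ∈ Icc (-(hd (Fin.last p))) 0, ∀ k, 0 ≤ φ s k)
    (huc : ContinuousOn u (Ici 0)) (hu : ∀ t, 0 ≤ t → ∀ j, 0 ≤ u t j) {M : ℝ}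
    (hM : ∀ k, ∑ i, ∑ j, |A i k j| < M) {ε : ℝ} (hε : 0 < ε) {t : ℝ} (ht : 0 ≤ t)
    (k : Fin n) :
    -(ε * exp (M * t)) < x t k := by
  obtain ⟨hxc, hxφ, hxint⟩ := hx
  set h := hd (Fin.last p)
  have hd_nonneg : ∀ i, 0 ≤ hd i := fun i => hd0 ▸ hmono (Fin.zero_le i)
  have hd_le : ∀ i, hd i ≤ h := fun i => hmono (Fin.le_last i)
  have hh : -h ≤ 0 := neg_nonpos.2 (hd_nonneg _)
  have hx_init : ∀ s ∈ Icc (-h) 0, ∀ j, 0 ≤ x s j := fun s hs j => hxφ s hs ▸ hφ s hs j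
  set F : Fin n → ℝ → ℝ := fun j s => x s j + ε * exp (M * s)
  have hFc : ∀ j, ContinuousOn (F j) (Ici 0) := fun j =>
    ((continuous_apply j).comp_continuousOn (hxc.mono (Ici_subset_Ici.2 hh))).add (by fun_prop)
  have hF0 : ∀ j, 0 < F j 0 := fun j => by
    simpa [F] using add_pos_of_nonneg_of_pos (hx_init 0 ⟨hh, le_rfl⟩ j) hε
  by_contra! hkt
  obtain ⟨T, hT, k, hkT, hFT⟩ :=
    exists_first_zero_of_continuousOn hFc hF0 ht (k := k) (by simp only [F]; linarith)
  have hM0 : 0 ≤ M := (sum_nonneg fun i _ => sum_nonneg fun j _ => abs_nonneg _).trans (hM k).le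
  set r := ε * exp (M * T)
  have hr : 0 < r := by positivity
  have hlow : ∀ i j, -r ≤ x (T - hd i) j := by
    intro i j
    rcases le_or_gt 0 (T - hd i) with hs | hs
    · have hF := hFT j _ ⟨hs, by linarith [hd_nonneg i]⟩
      have : exp (M * (T - hd i)) ≤ exp (M * T) :=
        exp_le_exp.2 (by nlinarith [hd_nonneg i])
      simp only [F] at hF
      nlinarith
    · linarith [hx_init (T - hd i) ⟨by linarith [hd_le i], hs.le⟩ j]
  have hxkT : x T k ≤ r := by simp only [F] at hkT; linarith
  have hfield := neg_mul_le_delayField_apply hd0 hA0 hAi hB (hu T hT.le) hlow hxkT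
  have hderiv : HasDerivAt (F k) (delayField hd A B u x T k + ε * (exp (M * T) * M)) T :=
    (hasDerivAt_pi.1 (hasDerivAt_of_eq_add_integral (continuousOn_delayField hd_le hxc huc)
      hxint hT) k).add (((hasDerivAt_id T).const_mul M).exp.const_mul ε |>.congr_deriv (by simp))
  have hmin : IsMinOn (F k) (Icc 0 T) T := fun s hs => by simpa [hkT] using hFT k s hs
  have := hderiv.nonpos_of_isMinOn_Icc hT hmin
  nlinarith [mul_lt_mul_of_pos_left (hM k) hr]

end DelaySystem

theorem delay_solution_nonneg_general {n m p : ℕ} (hd : Fin (p + 1) → ℝ)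
    (hd0 : hd 0 = 0) (hdmono : StrictMono hd)
    (A : Fin (p + 1) → Matrix (Fin n) (Fin n) ℝ) (B : Matrix (Fin n) (Fin m) ℝ)
    (hA0 : (A 0).IsMetzler)
    (hAi : ∀ i : Fin (p + 1), i ≠ 0 → ∀ k j : Fin n, 0 ≤ A i k j)
    (hB : ∀ k : Fin n, ∀ j : Fin m, 0 ≤ B k j)
    (φ : ℝ → Fin n → ℝ)
    (hφ : ∀ s ∈ Set.Icc (-(hd (Fin.last p))) 0, ∀ k : Fin n, 0 ≤ φ s k)
    (u : ℝ → Fin m → ℝ)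
    (huc : ContinuousOn u (Set.Ici 0))
    (hu : ∀ t : ℝ, 0 ≤ t → ∀ j : Fin m, 0 ≤ u t j)
    (x : ℝ → Fin n → ℝ)
    (hx : IsDelaySolution hd A B φ u x) :
    ∀ t : ℝ, 0 ≤ t → ∀ k : Fin n, 0 ≤ x t k := by
  intro t ht k
  obtain ⟨L, hL⟩ := (Set.finite_range fun k => ∑ i, ∑ j, |A i k j|).bddAbove
  refine le_of_forall_pos_lt_add fun δ hδ => ?_
  have := hx.neg_mul_exp_lt_apply hd0 hdmono.monotone hA0 hAi hB hφ huc hu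
    (fun k => (hL ⟨k, rfl⟩).trans_lt (lt_add_one L)) (div_pos hδ (exp_pos ((L + 1) * t)))
    ht k
  rw [div_mul_cancel₀ _ (exp_pos _).ne'] at this
  linarith

/-- For the delay system with `A₀` Metzler, `A₁, …, A_p` entrywise nonnegative
and `B` entrywise nonnegative, every solution with componentwise nonnegative continuous initial
function and componentwise nonnegative continuous input is componentwise nonnegative for all
`t ≥ 0`. -/
theorem delay_solution_nonneg {n m p : ℕ} (hd : Fin (p + 1) → ℝ)
    (hd0 : hd 0 = 0) (hdmono : StrictMono hd)
    (A : Fin (p + 1) → Matrix (Fin n) (Fin n) ℝ) (B : Matrix (Fin n) (Fin m) ℝ)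
    (hA0 : (A 0).IsMetzler)
    (hAi : ∀ i : Fin (p + 1), i ≠ 0 → ∀ k j : Fin n, 0 ≤ A i k j)
    (hB : ∀ k : Fin n, ∀ j : Fin m, 0 ≤ B k j)
    (φ : ℝ → Fin n → ℝ)
    (hφc : ContinuousOn φ (Set.Icc (-(hd (Fin.last p))) 0))
    (hφ : ∀ s ∈ Set.Icc (-(hd (Fin.last p))) 0, ∀ k : Fin n, 0 ≤ φ s k)
    (u : ℝ → Fin m → ℝ)
    (huc : ContinuousOn u (Set.Ici 0))
    (hu : ∀ t : ℝ, 0 ≤ t → ∀ j : Fin m, 0 ≤ u t j)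
    (x : ℝ → Fin n → ℝ)
    (hx : IsDelaySolution hd A B φ u x) :
    ∀ t : ℝ, 0 ≤ t → ∀ k : Fin n, 0 ≤ x t k :=
  delay_solution_nonneg_general hd hd0 hdmono A B hA0 hAi hB φ hφ u huc hu x hx
end

section
/- Consider the unforced linear time-invariant delay system with delays 0 = h₀ < h₁ < ⋯ < h_p = h and matrices A₀, …, A_p ∈ ℝ^{n×n}. Let μ₂(A₀) := (1/2)·λ_max(A₀ + A₀ᵀ) and suppose μ₂(A₀) < 0 and that there exist real numbers β₁, …, β_p > 0 with Σ_{i=1}^p β_i² = 1 such that the n×(pn) block-row matrix [ (1/β₁) A₁, (1/β₂) A₂, …, (1/β_p) A_p ] has ℓ₂ operator norm strictly smaller than |μ₂(A₀)|. Then for every continuous initial function φ : [−h, 0] → ℝⁿ, every solution x of the unforced delay system with initial function φ satisfies x(t) → 0 as t → ∞; i.e. the system is globally asymptotically Lyapunov stable independent of the delays. -/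
/-!
Razumikhin's argument with the comparison function `ψ t = C e^{-γ t}`, where `C` bounds the
initial data and `γ > 0` is so small that `γ + μ₂(A₀) + ‖B‖ e^{γh} < 0` (`B` the block-row
matrix). If `‖x‖` ever exceeded `ψ`, take the first time `t₀` at which `‖x t₀‖ = ψ t₀`. Every
delayed state then satisfies `‖x (t₀ - hᵢ)‖ ≤ ψ (t₀ - hᵢ) ≤ ψ t₀ e^{γh}`, and writing
`Σ_{i ≥ 1} Aᵢ x (t₀ - hᵢ) = B z` with `zᵢ = βᵢ x (t₀ - hᵢ)` gives `‖z‖ ≤ ψ t₀ e^{γh}` since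
`Σ βᵢ² = 1`. Hence `d/dt (‖x‖² - ψ²) ≤ 2 ψ t₀² (γ + μ₂(A₀) + ‖B‖ e^{γh}) < 0` at `t₀`, which is
impossible where `‖x‖² - ψ²` rises to `0` from below. So `‖x t‖ ≤ C e^{-γ t}`.
-/

open Matrix intervalIntegral

open scoped Matrix.Norms.L2Operator

/-- `IsUnforcedDelaySolution hd A φ x` : `x : [-h, ∞) → ℝⁿ` is a solution of the unforced delay
system `ẋ(t) = Σ_{i=0}^p A_i x(t - h_i)` with delays `hd 0 < hd 1 < ⋯ < hd p = h` and initial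
function `φ` on `[-h, 0]`, in the integrated (mild) sense. -/
def IsUnforcedDelaySolution {n p : ℕ} (hd : Fin (p + 1) → ℝ)
    (A : Fin (p + 1) → Matrix (Fin n) (Fin n) ℝ)
    (φ : ℝ → Fin n → ℝ) (x : ℝ → Fin n → ℝ) : Prop :=
  ContinuousOn x (Set.Ici (-(hd (Fin.last p)))) ∧
    (∀ s ∈ Set.Icc (-(hd (Fin.last p))) 0, x s = φ s) ∧
    ∀ t : ℝ, 0 ≤ t →
      x t = x 0 + ∫ τ in (0 : ℝ)..t, ∑ i : Fin (p + 1), (A i) *ᵥ x (τ - hd i)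

open Set Filter Topology WithLp

namespace EuclideanSpace

variable {ι : Type*} [Fintype ι]

theorem norm_toLp_sq_eq_dotProduct (v : ι → ℝ) : ‖toLp 2 v‖ ^ 2 = v ⬝ᵥ v := by
  rw [← real_inner_self_eq_norm_sq, inner_toLp_toLp, star_trivial]

theorem dotProduct_le_norm_toLp_mul_norm_toLp (u v : ι → ℝ) :
    u ⬝ᵥ v ≤ ‖toLp 2 u‖ * ‖toLp 2 v‖ := by
  simpa [inner_toLp_toLp, dotProduct_comm] using
    real_inner_le_norm (toLp 2 u) (toLp 2 v)

end EuclideanSpace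

namespace Matrix

variable {ι κ m : Type*} [Fintype ι] [Fintype κ] [Fintype m]

theorem IsHermitian.dotProduct_mulVec_le_iSup_eigenvalues_mul [DecidableEq ι]
    {M : Matrix ι ι ℝ} (hM : M.IsHermitian) (v : ι → ℝ) :
    v ⬝ᵥ M *ᵥ v ≤ (⨆ i, hM.eigenvalues i) * (v ⬝ᵥ v) := by
  set U : Matrix ι ι ℝ := (hM.eigenvectorUnitary : Matrix ι ι ℝ)
  set w := star U *ᵥ v with hw
  have hstar : ∀ u : ι → ℝ, u ᵥ* U = star U *ᵥ u := fun u => by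
    rw [star_eq_conjTranspose, conjTranspose_eq_transpose_of_trivial, mulVec_transpose]
  have hvv : v ⬝ᵥ v = w ⬝ᵥ w := by
    rw [hw, ← hstar, ← dotProduct_mulVec, hstar, mulVec_mulVec,
      Unitary.mul_star_self_of_mem hM.eigenvectorUnitary.2, one_mulVec]
  have hMv : v ⬝ᵥ M *ᵥ v = ∑ j, hM.eigenvalues j * w j ^ 2 := by
    conv_lhs => rw [hM.spectral_theorem, Unitary.conjStarAlgAut_apply]
    rw [← mulVec_mulVec, ← mulVec_mulVec, dotProduct_mulVec, hstar]
    simp only [mulVec_diagonal, dotProduct, Function.comp_apply, RCLike.ofReal_real_eq_id, id_eq]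
    exact Finset.sum_congr rfl fun j _ => by ring
  have hbdd : BddAbove (range hM.eigenvalues) := (finite_range _).bddAbove
  rw [hMv, hvv, dotProduct, Finset.mul_sum]
  exact Finset.sum_le_sum fun j _ => by
    rw [← sq]; exact mul_le_mul_of_nonneg_right (le_ciSup hbdd j) (sq_nonneg _)

theorem mulVec_dotProduct_le_half_iSup_eigenvalues_mul [DecidableEq ι] {A : Matrix ι ι ℝ}
    (hA : (A + Aᵀ).IsHermitian) (v : ι → ℝ) :
    (A *ᵥ v) ⬝ᵥ v ≤ (1 / 2 * ⨆ i, hA.eigenvalues i) * ‖toLp 2 v‖ ^ 2 := by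
  have hsymm : v ⬝ᵥ (A + Aᵀ) *ᵥ v = 2 * ((A *ᵥ v) ⬝ᵥ v) := by
    rw [add_mulVec, dotProduct_add, mulVec_transpose, dotProduct_comm v (v ᵥ* A),
      ← dotProduct_mulVec, dotProduct_comm v]
    ring
  have := hA.dotProduct_mulVec_le_iSup_eigenvalues_mul v
  rw [EuclideanSpace.norm_toLp_sq_eq_dotProduct]
  linarith

theorem norm_toLp_sum_mulVec_le [DecidableEq ι] [DecidableEq κ] (A : ι → Matrix m κ ℝ)
    {β : ι → ℝ} (hβ : ∀ i, β i ≠ 0) (hβsum : ∑ i, β i ^ 2 ≤ 1) (w : ι → κ → ℝ) {r : ℝ} (hr : 0 ≤ r)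
    (hw : ∀ i, ‖toLp 2 (w i)‖ ≤ r) :
    ‖toLp 2 (∑ i, A i *ᵥ w i)‖ ≤
      ‖(of fun k (q : ι × κ) => (β q.1)⁻¹ * A q.1 k q.2 : Matrix m (ι × κ) ℝ)‖ * r := by
  set z : ι × κ → ℝ := fun q => β q.1 * w q.1 q.2
  have hsum : ∑ i, A i *ᵥ w i = (of fun k (q : ι × κ) => (β q.1)⁻¹ * A q.1 k q.2) *ᵥ z := by
    ext k
    simp only [Finset.sum_apply, mulVec, dotProduct, of_apply, z, Fintype.sum_prod_type]
    refine Finset.sum_congr rfl fun i _ => Finset.sum_congr rfl fun j _ => ?_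
    field_simp [hβ i]
  have hz : ‖toLp 2 z‖ ≤ r := by
    refine le_of_sq_le_sq ?_ hr
    calc ‖toLp 2 z‖ ^ 2 = ∑ i, β i ^ 2 * ‖toLp 2 (w i)‖ ^ 2 := by
          simp only [EuclideanSpace.norm_toLp_sq_eq_dotProduct, dotProduct, z,
            Fintype.sum_prod_type, Finset.mul_sum]
          exact Finset.sum_congr rfl fun i _ => Finset.sum_congr rfl fun j _ => by ring
      _ ≤ ∑ i, β i ^ 2 * r ^ 2 := by gcongr with i; exact hw i
      _ ≤ r ^ 2 := by rw [← Finset.sum_mul]; exact mul_le_of_le_one_left (sq_nonneg r) hβsum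
  rw [hsum]
  exact (l2_opNorm_mulVec _ (toLp 2 z)).trans (by gcongr)

theorem mulVec_add_sum_mulVec_dotProduct_le [DecidableEq ι] [DecidableEq κ]
    {A₀ : Matrix ι ι ℝ} (hA₀ : (A₀ + A₀ᵀ).IsHermitian) (A : κ → Matrix ι ι ℝ) {β : κ → ℝ}
    (hβ : ∀ i, β i ≠ 0) (hβsum : ∑ i, β i ^ 2 ≤ 1) (v : ι → ℝ) (w : κ → ι → ℝ)
    {r : ℝ} (hr : 0 ≤ r) (hw : ∀ i, ‖toLp 2 (w i)‖ ≤ r) :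
    (A₀ *ᵥ v + ∑ i, A i *ᵥ w i) ⬝ᵥ v ≤ (1 / 2 * ⨆ i, hA₀.eigenvalues i) * ‖toLp 2 v‖ ^ 2 +
      ‖(of fun k (q : κ × ι) => (β q.1)⁻¹ * A q.1 k q.2 : Matrix ι (κ × ι) ℝ)‖ * r *
        ‖toLp 2 v‖ := by
  rw [add_dotProduct]
  gcongr
  · exact mulVec_dotProduct_le_half_iSup_eigenvalues_mul hA₀ v
  · exact (EuclideanSpace.dotProduct_le_norm_toLp_mul_norm_toLp _ v).trans <| by
      gcongr; exact norm_toLp_sum_mulVec_le A hβ hβsum w hr hw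

end Matrix

theorem HasDerivWithinAt.nonneg_of_isMaxOn_Icc {g : ℝ → ℝ} {a t d : ℝ} (hat : a < t)
    (hg : HasDerivWithinAt g d (Icc a t) t) (hmax : IsMaxOn g (Icc a t) t) : 0 ≤ d := by
  have hcone : a - t ∈ posTangentConeAt (Icc a t) t :=
    sub_mem_posTangentConeAt_of_segment_subset (by rw [segment_symm, segment_eq_Icc hat.le])
  have := hmax.localize.hasFDerivWithinAt_nonpos hg.hasFDerivWithinAt hcone
  rw [ContinuousLinearMap.toSpanSingleton_apply, smul_eq_mul] at this
  nlinarith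

theorem nonpos_of_hasDerivWithinAt_neg_at_first_zero {g : ℝ → ℝ} {a b : ℝ} (hab : a ≤ b)
    (hg : ContinuousOn g (Ici a)) (hneg : ∀ t ∈ Icc a b, g t < 0)
    (hderiv : ∀ t, b < t → g t = 0 → (∀ s ∈ Icc a t, g s ≤ 0) →
      ∃ d < 0, HasDerivWithinAt g d (Icc a t) t)
    {t : ℝ} (ht : a ≤ t) : g t ≤ 0 := by
  by_contra! hpos
  have hcont : ∀ s, ContinuousOn g (Icc a s) := fun s => hg.mono Icc_subset_Ici_self
  have hzero : ∀ s, a ≤ s → 0 ≤ g s → ∃ r ∈ Icc a s, g r = 0 := fun s has hs =>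
    intermediate_value_Icc has (hcont s) ⟨(hneg a ⟨le_rfl, hab⟩).le, hs⟩
  have hZ : IsCompact (Icc a t ∩ g ⁻¹' {0}) :=
    isCompact_Icc.of_isClosed_subset
      ((hcont t).preimage_isClosed_of_isClosed isClosed_Icc isClosed_singleton) inter_subset_left
  obtain ⟨t₀, ⟨ht₀, hgt₀ : g t₀ = 0⟩, hleast⟩ :=
    hZ.exists_isLeast (hzero t ht hpos.le)
  have hbefore : ∀ s ∈ Icc a t₀, g s ≤ 0 := by
    intro s ⟨has, hst₀⟩
    by_contra! hgs
    obtain ⟨r, ⟨har, hrs⟩, hgr⟩ := hzero s has hgs.le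
    have : t₀ ≤ r := hleast ⟨⟨har, hrs.trans (hst₀.trans ht₀.2)⟩, hgr⟩
    obtain rfl : s = t₀ := by linarith
    exact hgs.ne' hgt₀
  have hbt₀ : b < t₀ := by
    by_contra! h
    exact (hneg t₀ ⟨ht₀.1, h⟩).ne hgt₀
  obtain ⟨d, hd, hgd⟩ := hderiv t₀ hbt₀ hgt₀ hbefore
  have := hgd.nonneg_of_isMaxOn_Icc (hab.trans_lt hbt₀) fun s hs => by
    simpa [hgt₀] using hbefore s hs
  linarith

theorem exists_pos_add_add_mul_exp_lt_zero {μ c : ℝ} (h : μ + c < 0) (a : ℝ) :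
    ∃ γ > 0, γ + μ + c * Real.exp (γ * a) < 0 := by
  have hcont : Continuous fun γ : ℝ => γ + μ + c * Real.exp (γ * a) := by fun_prop
  have hev : ∀ᶠ γ in 𝓝 (0 : ℝ), γ + μ + c * Real.exp (γ * a) < 0 :=
    hcont.continuousAt.eventually_lt continuousAt_const (by simpa using h)
  obtain ⟨γ, hγ, hγpos⟩ := (hev.filter_mono nhdsWithin_le_nhds |>.and
    (self_mem_nhdsWithin : Ioi (0 : ℝ) ∈ 𝓝[>] 0)).exists
  exact ⟨γ, hγpos, hγ⟩

namespace IsUnforcedDelaySolution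

variable {n p : ℕ} {hd : Fin (p + 1) → ℝ} {A : Fin (p + 1) → Matrix (Fin n) (Fin n) ℝ}
  {φ x : ℝ → Fin n → ℝ}

theorem hasDerivAt (hx : IsUnforcedDelaySolution hd A φ x) (hle : ∀ i, hd i ≤ hd (Fin.last p))
    {t : ℝ} (ht : 0 < t) : HasDerivAt x (∑ i, A i *ᵥ x (t - hd i)) t := by
  set f : ℝ → Fin n → ℝ := fun τ => ∑ i, A i *ᵥ x (τ - hd i)
  have hf : ContinuousOn f (Ici 0) := by
    refine continuousOn_finsetSum _ fun i _ =>
      (continuous_const.matrix_mulVec continuous_id).comp_continuousOn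
        (hx.1.comp (continuous_sub_right _).continuousOn fun τ (hτ : 0 ≤ τ) => ?_)
    simp only [mem_Ici]
    linarith [hle i]
  have hFTC : HasDerivAt (fun t => x 0 + ∫ τ in (0 : ℝ)..t, f τ) (f t) t :=
    (integral_hasDerivAt_right ((hf.mono Icc_subset_Ici_self).intervalIntegrable_of_Icc ht.le)
      ((hf.mono Ioi_subset_Ici_self).stronglyMeasurableAtFilter isOpen_Ioi t ht)
      (hf.continuousAt (Ici_mem_nhds ht))).const_add _
  exact hFTC.congr_of_eventuallyEq <|
    (eventually_gt_nhds ht).mono fun s hs => hx.2.2 s hs.le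

theorem hasDerivAt_norm_sq (hx : IsUnforcedDelaySolution hd A φ x)
    (hle : ∀ i, hd i ≤ hd (Fin.last p)) {t : ℝ} (ht : 0 < t) :
    HasDerivAt (fun s => ‖toLp 2 (x s)‖ ^ 2) (2 * ((∑ i, A i *ᵥ x (t - hd i)) ⬝ᵥ x t)) t :=
  ((PiLp.continuousLinearEquiv 2 ℝ _).symm.hasFDerivAt.comp_hasDerivAt t
    (hx.hasDerivAt hle ht)).norm_sq

theorem norm_le_mul_exp (hx : IsUnforcedDelaySolution hd A φ x) (hd0 : hd 0 = 0)
    (hmono : Monotone hd) {μ c : ℝ}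
    (henergy : ∀ (v : Fin n → ℝ) (w : Fin p → Fin n → ℝ) (r : ℝ), 0 ≤ r →
      (∀ i, ‖toLp 2 (w i)‖ ≤ r) →
      (A 0 *ᵥ v + ∑ i, A i.succ *ᵥ w i) ⬝ᵥ v ≤ μ * ‖toLp 2 v‖ ^ 2 + c * r * ‖toLp 2 v‖)
    {γ C : ℝ} (hγ : 0 < γ) (hrate : γ + μ + c * Real.exp (γ * hd (Fin.last p)) < 0)
    (hC : ∀ s ∈ Icc (-hd (Fin.last p)) 0, ‖toLp 2 (x s)‖ < C)
    {t : ℝ} (ht : -hd (Fin.last p) ≤ t) : ‖toLp 2 (x t)‖ ≤ C * Real.exp (-γ * t) := by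
  set h := hd (Fin.last p)
  have hle : ∀ i, hd i ≤ h := fun i => hmono (Fin.le_last i)
  have hnonneg : ∀ i, 0 ≤ hd i := fun i => hd0 ▸ hmono (Fin.zero_le i)
  have hC0 : 0 < C :=
    (norm_nonneg _).trans_lt (hC 0 ⟨by linarith [hnonneg (Fin.last p)], le_rfl⟩)
  set ψ : ℝ → ℝ := fun s => C * Real.exp (-γ * s)
  have hψ : ∀ s, 0 < ψ s := fun s => by positivity
  have hsq : ∀ s, ‖toLp 2 (x s)‖ ^ 2 - ψ s ^ 2 ≤ 0 ↔ ‖toLp 2 (x s)‖ ≤ ψ s := fun s => by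
    rw [sub_nonpos, pow_le_pow_iff_left₀ (norm_nonneg _) (hψ s).le two_ne_zero]
  refine (hsq t).1 <| nonpos_of_hasDerivWithinAt_neg_at_first_zero
    (g := fun s => ‖toLp 2 (x s)‖ ^ 2 - ψ s ^ 2) (neg_nonpos.2 (hnonneg _)) ?_ ?_ ?_ ht
  · exact (((PiLp.continuous_toLp 2 _).comp_continuousOn hx.1).norm.pow 2).sub (by fun_prop)
  · intro s hs
    have hCψ : C ≤ ψ s := le_mul_of_one_le_right hC0.le (Real.one_le_exp (by nlinarith [hs.2]))
    exact sub_neg.2 (pow_lt_pow_left₀ ((hC s hs).trans_le hCψ) (norm_nonneg _) two_ne_zero)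
  · intro t₀ ht₀ hzero hbefore
    have hxt₀ : ‖toLp 2 (x t₀)‖ = ψ t₀ :=
      (pow_left_inj₀ (norm_nonneg _) (hψ t₀).le two_ne_zero).1 (sub_eq_zero.1 hzero)
    have hdelayed : ∀ i : Fin p, ‖toLp 2 (x (t₀ - hd i.succ))‖ ≤ ψ t₀ * Real.exp (γ * h) := by
      intro i
      have hmem : t₀ - hd i.succ ∈ Icc (-h) t₀ :=
        ⟨by linarith [hle i.succ], by linarith [hnonneg i.succ]⟩
      refine ((hsq _).1 (hbefore _ hmem)).trans ?_
      simp only [ψ]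
      rw [mul_assoc, ← Real.exp_add]
      gcongr
      nlinarith [hle i.succ]
    have hfield :
        (∑ i, A i *ᵥ x (t₀ - hd i)) ⬝ᵥ x t₀ ≤ (μ + c * Real.exp (γ * h)) * ψ t₀ ^ 2 := by
      rw [Fin.sum_univ_succ, hd0, sub_zero]
      refine (henergy _ _ _ (by positivity) hdelayed).trans_eq ?_
      rw [hxt₀]
      ring
    have hψ' : HasDerivAt (fun s => ψ s ^ 2) (-2 * γ * ψ t₀ ^ 2) t₀ := by
      refine ((((hasDerivAt_id t₀).const_mul (-γ)).exp.const_mul C).fun_pow 2).congr_deriv ?_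
      simp only [ψ, id]
      ring
    refine ⟨_, ?_, ((hx.hasDerivAt_norm_sq hle ht₀).sub hψ').hasDerivWithinAt⟩
    nlinarith [mul_neg_of_pos_of_neg (pow_pos (hψ t₀) 2) hrate]

end IsUnforcedDelaySolution

/-- Suppose `μ₂(A₀) := (1/2)·λ_max(A₀ + A₀ᵀ) < 0` and there are `β₁, …, β_p > 0`
with `Σ β_i² = 1` such that the `ℓ₂` operator norm of the block-row matrix
`[(1/β₁) A₁, …, (1/β_p) A_p]` is strictly smaller than `|μ₂(A₀)|`.  Then for every continuous
initial function `φ`, every solution of the unforced delay system tends to `0` as `t → ∞`: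
the system is globally asymptotically Lyapunov stable independent of the delays. -/
theorem delay_system_globally_asymptotically_stable {n p : ℕ} (hd : Fin (p + 1) → ℝ)
    (hd0 : hd 0 = 0) (hdmono : StrictMono hd)
    (A : Fin (p + 1) → Matrix (Fin n) (Fin n) ℝ)
    (hsym : (A 0 + (A 0)ᵀ).IsHermitian)
    (hμ : (1 / 2 : ℝ) * (⨆ i : Fin n, hsym.eigenvalues i) < 0)
    (β : Fin p → ℝ) (hβpos : ∀ i, 0 < β i) (hβsum : ∑ i, β i ^ 2 = 1)
    (hnorm :
      ‖(Matrix.of fun (k : Fin n) (q : Fin p × Fin n) =>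
          (β q.1)⁻¹ * A q.1.succ k q.2 : Matrix (Fin n) (Fin p × Fin n) ℝ)‖ <
        |(1 / 2 : ℝ) * (⨆ i : Fin n, hsym.eigenvalues i)|) :
    ∀ φ : ℝ → Fin n → ℝ, ContinuousOn φ (Set.Icc (-(hd (Fin.last p))) 0) →
      ∀ x : ℝ → Fin n → ℝ, IsUnforcedDelaySolution hd A φ x →
        Filter.Tendsto x Filter.atTop (nhds 0) := by
  intro φ _ x hx
  set μ := (1 / 2 : ℝ) * ⨆ i : Fin n, hsym.eigenvalues i
  set B : Matrix (Fin n) (Fin p × Fin n) ℝ :=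
    Matrix.of fun (k : Fin n) (q : Fin p × Fin n) => (β q.1)⁻¹ * A q.1.succ k q.2
  have hrate : μ + ‖B‖ < 0 := by
    rw [abs_of_neg hμ] at hnorm
    linarith
  obtain ⟨γ, hγ, hγrate⟩ := exists_pos_add_add_mul_exp_lt_zero hrate (hd (Fin.last p))
  obtain ⟨C, hC⟩ := isCompact_Icc.exists_bound_of_continuousOn
    ((PiLp.continuous_toLp 2 _).comp_continuousOn (hx.1.mono Icc_subset_Ici_self))
  have hdecay : ∀ t, -hd (Fin.last p) ≤ t → ‖toLp 2 (x t)‖ ≤ (C + 1) * Real.exp (-γ * t) :=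
    fun t ht => hx.norm_le_mul_exp hd0 hdmono.monotone
      (fun v w r hr hw => Matrix.mulVec_add_sum_mulVec_dotProduct_le hsym _
        (fun i => (hβpos i).ne') hβsum.le v w hr hw)
      hγ hγrate (fun s hs => (hC s hs).trans_lt (lt_add_one C)) ht
  have hlim : Tendsto (fun t => toLp 2 (x t)) atTop (𝓝 0) := by
    refine squeeze_zero_norm' ((eventually_ge_atTop _).mono hdecay) ?_
    simpa using (Real.tendsto_exp_atBot.comp
      (tendsto_id.const_mul_atTop_of_neg (neg_neg_of_pos hγ))).const_mul (C + 1)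
  exact ((PiLp.continuous_ofLp 2 _).tendsto 0).comp hlim
end

section
/- Consider the linear time-invariant delay system with delays 0 = h₀ < h₁ < ⋯ < h_p = h, matrices A₀, …, A_p ∈ ℝ^{n×n} and B ∈ ℝ^{n×m}. Suppose that for every continuous initial function φ : [−h, 0] → ℝⁿ with φ(t) ≥ 0 componentwise on [−h, 0], every continuous input u : [0, ∞) → ℝ^m with u(t) ≥ 0 componentwise for all t ≥ 0, and every solution x of the delay system with data (φ, u), one has x(t) ≥ 0 componentwise for all t ≥ 0. Then A₀ is Metzler, A₁, …, A_p are entrywise nonnegative, and B is entrywise nonnegative. -/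
open Matrix intervalIntegral

/-!
If a solution `x` stays nonnegative and `x 0 k = 0`, then the right derivative of `x k` at `0`,
the `k`-th entry of `∑ᵢ Aᵢ φ(-hᵢ) + B u(0)`, is nonnegative. Taking `u = 0` and for `φ` a
nonnegative bump in direction `e_j` peaked at `-hᵢ` and vanishing at the other `-hₗ` makes this
entry `(Aᵢ)ₖⱼ`; taking `φ = 0` and `u ≡ e_j` makes it `Bₖⱼ`.

The solutions needed here exist by the method of steps: as `hᵢ ≥ δ > 0` for `i ≠ 0`, solving
`ẏ = A₀ y + f` by variation of constants, with the delayed terms of a given trajectory as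
forcing `f`, is a map whose value on `(-∞, a + δ]` depends only on the trajectory on
`(-∞, a]`; its iterates therefore stabilise and glue to a fixed point.
-/

open Set Filter Topology NormedSpace

section VariationOfConstants

variable {E : Type*} [NormedAddCommGroup E] [NormedSpace ℝ E]
  {T : E →L[ℝ] E} {f g : ℝ → E} {c : E}

/-- Duhamel's formula for the solution of `y' = T y + f`, `y 0 = c`. -/
noncomputable def variationOfConstants (T : E →L[ℝ] E) (f : ℝ → E) (c : E) (t : ℝ) : E :=
  exp (t • T) (c + ∫ s in 0..t, exp (-s • T) (f s))

theorem variationOfConstants_zero : variationOfConstants T f c 0 = c := by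
  simp [variationOfConstants]

theorem variationOfConstants_congr {t : ℝ} (h : EqOn f g (uIcc 0 t)) :
    variationOfConstants T f c t = variationOfConstants T g c t := by
  simp only [variationOfConstants, integral_congr fun s hs => congrArg _ (h hs)]

variable [CompleteSpace E]

theorem exp_smul_mul_exp_neg_smul (T : E →L[ℝ] E) (t : ℝ) :
    exp (t • T) * exp (-t • T) = 1 := by
  have hT : ∀ s : ℝ,
      s • T ∈ Metric.eball (0 : E →L[ℝ] E) (expSeries ℝ (E →L[ℝ] E)).radius :=
    fun s => (expSeries_radius_eq_top ℝ (E →L[ℝ] E)).symm ▸ edist_lt_top _ _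
  rw [← exp_add_of_commute_of_mem_ball (((Commute.refl T).smul_left t).smul_right (-t))
    (hT t) (hT (-t)), ← add_smul, add_neg_cancel, zero_smul, exp_zero]

theorem hasDerivAt_variationOfConstants (hf : Continuous f) (t : ℝ) :
    HasDerivAt (variationOfConstants T f c) (T (variationOfConstants T f c t) + f t) t := by
  have hexp : HasDerivAt (fun s : ℝ => exp (s • T)) (T * exp (t • T)) t :=
    hasDerivAt_exp_smul_const' T t
  have hint : Continuous fun s : ℝ => exp (-s • T) (f s) :=
    ((differentiable_exp_smul_const ℝ T).continuous.comp continuous_neg).clm_apply hf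
  have hprim : HasDerivAt (fun s => c + ∫ τ in 0..s, exp (-τ • T) (f τ))
      (exp (-t • T) (f t)) t :=
    (hint.integral_hasStrictDerivAt 0 t).hasDerivAt.const_add c
  refine (hexp.clm_apply hprim).congr_deriv ?_
  rw [mul_apply_eq_comp, ← mul_apply_eq_comp (exp (t • T)), exp_smul_mul_exp_neg_smul,
    one_apply_eq_self]
  rfl

theorem continuous_variationOfConstants (hf : Continuous f) :
    Continuous (variationOfConstants T f c) :=
  continuous_iff_continuousAt.2 fun t => (hasDerivAt_variationOfConstants hf t).continuousAt

theorem variationOfConstants_eq_add_integral (hf : Continuous f) (t : ℝ) :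
    variationOfConstants T f c t = c + ∫ s in 0..t, (T (variationOfConstants T f c s) + f s) := by
  have hcont : Continuous fun s => T (variationOfConstants T f c s) + f s :=
    (T.continuous.comp (continuous_variationOfConstants hf)).add hf
  rw [integral_eq_sub_of_hasDerivAt (fun s _ => hasDerivAt_variationOfConstants hf s)
    (hcont.intervalIntegrable 0 t), variationOfConstants_zero, add_sub_cancel]

end VariationOfConstants

section MethodOfSteps

variable {α : Type*} {Φ : (ℝ → α) → ℝ → α} {δ a : ℝ} {g : ℝ → α}

def IsCausalWithLag (Φ : (ℝ → α) → ℝ → α) (δ : ℝ) : Prop :=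
  ∀ ⦃g₁ g₂ : ℝ → α⦄ ⦃a : ℝ⦄,
    EqOn g₁ g₂ (Iic a) → EqOn (Φ g₁) (Φ g₂) (Iic (a + δ))

theorem IsCausalWithLag.eqOn_iterate_succ (hΦ : IsCausalWithLag Φ δ)
    (h₀ : EqOn (Φ g) g (Iic a)) (k : ℕ) :
    EqOn (Φ^[k + 1] g) (Φ^[k] g) (Iic (a + k * δ)) := by
  induction k with
  | zero => simpa using h₀
  | succ k ih =>
    have h := hΦ ih
    rw [← Function.iterate_succ_apply' Φ (k + 1), ← Function.iterate_succ_apply' Φ k] at h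
    simpa [add_mul, add_assoc] using h

theorem IsCausalWithLag.eqOn_iterate (hΦ : IsCausalWithLag Φ δ) (hδ : 0 ≤ δ)
    (h₀ : EqOn (Φ g) g (Iic a)) {k l : ℕ} (hkl : k ≤ l) :
    EqOn (Φ^[l] g) (Φ^[k] g) (Iic (a + k * δ)) := by
  induction l, hkl using Nat.le_induction with
  | base => exact fun _ _ => rfl
  | succ l hkl ih =>
    have hsub : Iic (a + k * δ) ⊆ Iic (a + l * δ) := Iic_subset_Iic.2 (by gcongr)
    exact ((hΦ.eqOn_iterate_succ h₀ l).mono hsub).trans ih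

theorem IsCausalWithLag.exists_continuous_isFixedPt [TopologicalSpace α]
    (hΦ : IsCausalWithLag Φ δ) (hδ : 0 < δ) (hcont : ∀ g, Continuous g → Continuous (Φ g))
    (hg : Continuous g) (h₀ : EqOn (Φ g) g (Iic a)) :
    ∃ x, Continuous x ∧ Function.IsFixedPt Φ x := by
  -- the iterates agree on `(-∞, a + k δ]`, so near `t` the fixed point is any late iterate
  set N : ℝ → ℕ := fun t => ⌈(t - a) / δ⌉₊ + 1
  have hN : ∀ t, t < a + N t * δ := fun t => by
    have := (div_le_iff₀ hδ).1 (Nat.le_ceil ((t - a) / δ))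
    push_cast [N]
    nlinarith
  set x : ℝ → α := fun t => Φ^[N t] g t
  have hx : ∀ k, EqOn x (Φ^[k] g) (Iic (a + k * δ)) := fun k t ht => by
    rcases le_total k (N t) with hk | hk
    · exact hΦ.eqOn_iterate hδ.le h₀ hk ht
    · exact (hΦ.eqOn_iterate hδ.le h₀ hk (hN t).le).symm
  have hiter : ∀ k, Continuous (Φ^[k] g) := fun k => by
    induction k with
    | zero => exact hg
    | succ k ih => rw [Function.iterate_succ_apply']; exact hcont _ ih
  refine ⟨x, continuous_iff_continuousAt.2 fun t => ?_, funext fun t => ?_⟩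
  · exact (hiter (N t)).continuousAt.congr <|
      mem_of_superset (Iio_mem_nhds (hN t)) fun s hs => (hx _ (Iio_subset_Iic_self hs)).symm
  · calc Φ x t = Φ^[N t + 1] g t := by
          rw [Function.iterate_succ_apply']
          exact hΦ (hx (N t)) (by rw [mem_Iic]; linarith [hN t])
      _ = x t := (hx (N t + 1) (by rw [mem_Iic, Nat.cast_succ]; linarith [hN t])).symm

end MethodOfSteps

section Existence

variable {n m p : ℕ} (hd : Fin (p + 1) → ℝ) (A : Fin (p + 1) → Matrix (Fin n) (Fin n) ℝ)
  (B : Matrix (Fin n) (Fin m) ℝ) (u : ℝ → Fin m → ℝ) (φ : ℝ → Fin n → ℝ)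

noncomputable def delayedForcing (g : ℝ → Fin n → ℝ) (τ : ℝ) : Fin n → ℝ :=
  ∑ i ∈ Finset.univ.erase 0, A i *ᵥ g (τ - hd i) + B *ᵥ u τ

/-- Method of steps: solve `ẏ = A₀ y + f`, `y 0 = φ 0`, where the forcing `f` consists of the
input and the delayed terms, evaluated along `g`. -/
noncomputable def stepMap (g : ℝ → Fin n → ℝ) (t : ℝ) : Fin n → ℝ :=
  if t ≤ 0 then φ t
  else variationOfConstants (toLin' (A 0)).toContinuousLinearMap
    (delayedForcing hd A B u g) (φ 0) t

variable {hd A B u φ}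

theorem stepMap_of_nonneg (g : ℝ → Fin n → ℝ) {t : ℝ} (ht : 0 ≤ t) :
    stepMap hd A B u φ g t =
      variationOfConstants (toLin' (A 0)).toContinuousLinearMap
        (delayedForcing hd A B u g) (φ 0) t := by
  rcases ht.eq_or_lt with rfl | ht
  · simp [stepMap, variationOfConstants_zero]
  · simp [stepMap, ht.not_ge]

theorem continuous_delayedForcing (hu : Continuous u) {g : ℝ → Fin n → ℝ}
    (hg : Continuous g) :
    Continuous (delayedForcing hd A B u g) := by
  unfold delayedForcing
  fun_prop

theorem continuous_stepMap (hφ : Continuous φ) (hu : Continuous u) {g : ℝ → Fin n → ℝ}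
    (hg : Continuous g) : Continuous (stepMap hd A B u φ g) :=
  Continuous.if_le hφ (continuous_variationOfConstants (continuous_delayedForcing hu hg))
    continuous_id continuous_const fun t ht => by rw [ht, variationOfConstants_zero]

theorem isCausalWithLag_stepMap {δ : ℝ} (hδ : ∀ i ≠ 0, δ ≤ hd i) :
    IsCausalWithLag (stepMap hd A B u φ) δ := by
  intro g₁ g₂ a h t ht
  unfold stepMap
  split_ifs with ht0
  · rfl
  refine variationOfConstants_congr fun τ hτ => ?_
  rw [uIcc_of_le (not_le.1 ht0).le] at hτ
  unfold delayedForcing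
  congr 1
  refine Finset.sum_congr rfl fun i hi => ?_
  rw [h (show τ - hd i ≤ a by linarith [hτ.2, hδ i (Finset.ne_of_mem_erase hi), mem_Iic.1 ht])]

theorem isDelaySolution_of_isFixedPt (hd0 : hd 0 = 0) (hu : Continuous u)
    {x : ℝ → Fin n → ℝ} (hx : Continuous x)
    (hfix : Function.IsFixedPt (stepMap hd A B u φ) x) :
    IsDelaySolution hd A B φ u x := by
  have hstep : ∀ t, 0 ≤ t → x t =
      variationOfConstants (toLin' (A 0)).toContinuousLinearMap
        (delayedForcing hd A B u x) (φ 0) t :=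
    fun t ht => (congrFun hfix t).symm.trans (stepMap_of_nonneg x ht)
  refine ⟨hx.continuousOn, fun s hs => ?_, fun t ht => ?_⟩
  · rw [← hfix, stepMap, if_pos hs.2]
  rw [hstep t ht, variationOfConstants_eq_add_integral (continuous_delayedForcing hu hx),
    hstep 0 le_rfl, variationOfConstants_zero]
  congr 1
  refine integral_congr fun τ hτ => ?_
  rw [uIcc_of_le ht] at hτ
  rw [← Finset.add_sum_erase _ _ (Finset.mem_univ (0 : Fin (p + 1))), hd0, sub_zero, add_assoc,
    ← hstep τ hτ.1]
  rfl

theorem exists_isDelaySolution (hd0 : hd 0 = 0) (hd_pos : ∀ i ≠ 0, 0 < hd i)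
    (hφ : Continuous φ) (hu : Continuous u) : ∃ x, IsDelaySolution hd A B φ u x := by
  obtain ⟨δ, hδ, hδle⟩ : ∃ δ > 0, ∀ i ≠ 0, δ ≤ hd i := by
    have : ∀ᶠ δ in 𝓝[>] (0 : ℝ), ∀ i, i ≠ 0 → δ ≤ hd i := by
      refine eventually_all.2 fun i => ?_
      by_cases hi : i = 0
      · exact .of_forall fun _ h => absurd hi h
      · exact (eventually_le_nhds (hd_pos i hi)).filter_mono nhdsWithin_le_nhds |>.mono
          fun _ h _ => h
    exact (this.and self_mem_nhdsWithin).exists.imp fun δ h => ⟨h.2, h.1⟩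
  obtain ⟨x, hx, hfix⟩ := (isCausalWithLag_stepMap hδle).exists_continuous_isFixedPt hδ
    (fun _ => continuous_stepMap hφ hu) hφ (a := 0) fun t ht => if_pos ht
  exact ⟨x, isDelaySolution_of_isFixedPt hd0 hu hx hfix⟩

end Existence

theorem IsMinOn.hasDerivWithinAt_Ici_nonneg {g : ℝ → ℝ} {g' a : ℝ}
    (hmin : IsMinOn g (Ici a) a) (hg : HasDerivWithinAt g g' (Ici a) a) : 0 ≤ g' := by
  simpa using (IsMinOn.localize hmin).hasFDerivWithinAt_nonneg hg.hasFDerivWithinAt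
    (mem_posTangentConeAt_of_segment_subset (y := 1)
      ((segment_subset_Icc (by simp)).trans Icc_subset_Ici_self))

section Positivity

variable {n m p : ℕ} {hd : Fin (p + 1) → ℝ} {A : Fin (p + 1) → Matrix (Fin n) (Fin n) ℝ}
  {B : Matrix (Fin n) (Fin m) ℝ} {u : ℝ → Fin m → ℝ} {φ x : ℝ → Fin n → ℝ}

theorem IsDelaySolution.hasDerivWithinAt_zero (hd0 : hd 0 = 0) (hmono : Monotone hd)
    (hu : ContinuousOn u (Ici 0)) (hx : IsDelaySolution hd A B φ u x) :
    HasDerivWithinAt x (∑ i, A i *ᵥ φ (-hd i) + B *ᵥ u 0) (Ici 0) 0 := by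
  obtain ⟨hxc, hxφ, hxint⟩ := hx
  have hhd : ∀ i, hd i ∈ Icc 0 (hd (Fin.last p)) := fun i =>
    ⟨hd0 ▸ hmono (Fin.zero_le i), hmono (Fin.le_last i)⟩
  set F : ℝ → Fin n → ℝ := fun τ => ∑ i, A i *ᵥ x (τ - hd i) + B *ᵥ u τ
  have hF : ContinuousOn F (Ici 0) := by
    have hmul : ∀ {q r : ℕ} (M : Matrix (Fin q) (Fin r) ℝ), Continuous (M *ᵥ ·) :=
      fun M => continuous_const.matrix_mulVec continuous_id
    refine .add (continuousOn_finsetSum _ fun i _ => ?_) ((hmul B).comp_continuousOn hu)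
    refine (hmul (A i)).comp_continuousOn
      (hxc.comp (by fun_prop) fun τ hτ => ?_)
    simp only [mem_Ici] at hτ ⊢
    linarith [(hhd i).2]
  have hF0 : F 0 = ∑ i, A i *ᵥ φ (-hd i) + B *ᵥ u 0 := by
    simp only [F, zero_sub]
    congr 1
    exact Finset.sum_congr rfl fun i _ => by
      rw [hxφ _ ⟨neg_le_neg (hhd i).2, neg_nonpos.2 (hhd i).1⟩]
  have hderiv : HasDerivWithinAt (fun t => x 0 + ∫ τ in 0..t, F τ) (F 0) (Ici 0) 0 :=
    (integral_hasDerivWithinAt_right IntervalIntegrable.refl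
      (hF.stronglyMeasurableAtFilter_nhdsWithin measurableSet_Ici 0 |>.filter_mono
        (nhdsWithin_mono _ Ioi_subset_Ici_self))
      ((hF 0 self_mem_Ici).mono Ioi_subset_Ici_self)).const_add _
  rw [← hF0]
  exact hderiv.congr (fun t ht => hxint t ht) (hxint 0 le_rfl)

end Positivity

section Necessity

variable {n m p : ℕ} {hd : Fin (p + 1) → ℝ} {A : Fin (p + 1) → Matrix (Fin n) (Fin n) ℝ}
  {B : Matrix (Fin n) (Fin m) ℝ}

def IsPositiveDelaySystem (hd : Fin (p + 1) → ℝ)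
    (A : Fin (p + 1) → Matrix (Fin n) (Fin n) ℝ) (B : Matrix (Fin n) (Fin m) ℝ) : Prop :=
  ∀ φ : ℝ → Fin n → ℝ,
    ContinuousOn φ (Set.Icc (-(hd (Fin.last p))) 0) →
    (∀ s ∈ Set.Icc (-(hd (Fin.last p))) 0, ∀ k : Fin n, 0 ≤ φ s k) →
    ∀ u : ℝ → Fin m → ℝ, ContinuousOn u (Set.Ici 0) →
    (∀ t : ℝ, 0 ≤ t → ∀ j : Fin m, 0 ≤ u t j) →
    ∀ x : ℝ → Fin n → ℝ, IsDelaySolution hd A B φ u x →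
    ∀ t : ℝ, 0 ≤ t → ∀ k : Fin n, 0 ≤ x t k

theorem IsPositiveDelaySystem.rhs_nonneg (hP : IsPositiveDelaySystem hd A B) (hd0 : hd 0 = 0)
    (hmono : StrictMono hd) {φ : ℝ → Fin n → ℝ} {u : ℝ → Fin m → ℝ}
    (hφ : Continuous φ) (hφ0 : ∀ s k, 0 ≤ φ s k) (hu : Continuous u) (hu0 : ∀ t j, 0 ≤ u t j)
    {k : Fin n} (hk : φ 0 k = 0) : 0 ≤ (∑ i, A i *ᵥ φ (-hd i) + B *ᵥ u 0) k := by
  obtain ⟨x, hx⟩ := exists_isDelaySolution hd0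
    (fun i hi => hd0 ▸ hmono (Fin.pos_iff_ne_zero.2 hi)) hφ hu
  have hxnn := hP φ hφ.continuousOn (fun s _ => hφ0 s) u hu.continuousOn (fun t _ => hu0 t) x hx
  have hx0 : x 0 k = 0 := by
    rw [hx.2.1 0 ⟨neg_nonpos.2 (hd0 ▸ hmono.monotone (Fin.zero_le _)), le_rfl⟩, hk]
  refine IsMinOn.hasDerivWithinAt_Ici_nonneg (fun t ht => ?_)
    (hasDerivWithinAt_pi.1 (hx.hasDerivWithinAt_zero hd0 hmono.monotone hu.continuousOn) k)
  simpa [hx0] using hxnn t ht k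

theorem IsPositiveDelaySystem.coeff_nonneg (hP : IsPositiveDelaySystem hd A B) (hd0 : hd 0 = 0)
    (hmono : StrictMono hd) {i : Fin (p + 1)} {k j : Fin n} (hikj : i = 0 → k ≠ j) :
    0 ≤ A i k j := by
  -- a squared Lagrange basis polynomial is a nonnegative bump at `-hd i` vanishing at every
  -- other `-hd l`, so the initial function only feeds the delay `hd i`
  set P := Lagrange.basis Finset.univ (fun l => -hd l) i
  have hinj : Set.InjOn (fun l => -hd l) (Finset.univ : Finset (Fin (p + 1))) :=
    fun _ _ _ _ h => hmono.injective (neg_injective h)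
  set φ : ℝ → Fin n → ℝ := fun s => P.eval s ^ 2 • Pi.single j 1
  have hφ_self : φ (-hd i) = Pi.single j 1 := by
    have hP1 : P.eval (-hd i) = 1 := Lagrange.eval_basis_self hinj (Finset.mem_univ i)
    simp [φ, hP1]
  have hφ_ne : ∀ l ≠ i, φ (-hd l) = 0 := fun l hl => by
    have hP0 : P.eval (-hd l) = 0 :=
      Lagrange.eval_basis_of_ne (v := fun l => -hd l) hl.symm (Finset.mem_univ l)
    simp [φ, hP0]
  have hsum : ∑ l, A l *ᵥ φ (-hd l) = A i *ᵥ Pi.single j 1 := by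
    rw [Finset.sum_eq_single i (fun l _ hl => by rw [hφ_ne l hl, mulVec_zero]) (by simp),
      hφ_self]
  have hk : φ 0 k = 0 := by
    have h0 : φ 0 = φ (-hd 0) := by rw [hd0, neg_zero]
    rcases eq_or_ne i 0 with rfl | hi
    · rw [h0, hφ_self, Pi.single_apply, if_neg (hikj rfl)]
    · rw [h0, hφ_ne 0 hi.symm, Pi.zero_apply]
  have hφ0 : ∀ s k, 0 ≤ φ s k := fun s k =>
    mul_nonneg (sq_nonneg _)
      ((Pi.single_nonneg.2 zero_le_one : (0 : Fin n → ℝ) ≤ Pi.single j 1) k)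
  simpa [hsum, mulVec_single] using
    hP.rhs_nonneg hd0 hmono (u := 0) (by fun_prop) hφ0 continuous_const (fun _ _ => le_rfl) hk

theorem IsPositiveDelaySystem.input_nonneg (hP : IsPositiveDelaySystem hd A B) (hd0 : hd 0 = 0)
    (hmono : StrictMono hd) (k : Fin n) (j : Fin m) : 0 ≤ B k j := by
  simpa [mulVec_single] using hP.rhs_nonneg hd0 hmono (φ := 0) (u := fun _ => Pi.single j 1)
    continuous_const (fun _ _ => le_rfl) continuous_const
    (fun _ => (Pi.single_nonneg.2 zero_le_one : (0 : Fin m → ℝ) ≤ Pi.single j 1)) (k := k) rfl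

end Necessity

/-- If every solution of the delay system with componentwise nonnegative
continuous initial function and componentwise nonnegative continuous input stays componentwise
nonnegative for all `t ≥ 0`, then `A₀` is Metzler, `A₁, …, A_p` are entrywise nonnegative and
`B` is entrywise nonnegative. -/
theorem delay_system_positive_necessity {n m p : ℕ} (hd : Fin (p + 1) → ℝ)
    (hd0 : hd 0 = 0) (hdmono : StrictMono hd)
    (A : Fin (p + 1) → Matrix (Fin n) (Fin n) ℝ) (B : Matrix (Fin n) (Fin m) ℝ)
    (hpos : ∀ φ : ℝ → Fin n → ℝ,
      ContinuousOn φ (Set.Icc (-(hd (Fin.last p))) 0) →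
      (∀ s ∈ Set.Icc (-(hd (Fin.last p))) 0, ∀ k : Fin n, 0 ≤ φ s k) →
      ∀ u : ℝ → Fin m → ℝ, ContinuousOn u (Set.Ici 0) →
      (∀ t : ℝ, 0 ≤ t → ∀ j : Fin m, 0 ≤ u t j) →
      ∀ x : ℝ → Fin n → ℝ, IsDelaySolution hd A B φ u x →
      ∀ t : ℝ, 0 ≤ t → ∀ k : Fin n, 0 ≤ x t k) :
    (A 0).IsMetzler ∧
      (∀ i : Fin (p + 1), i ≠ 0 → ∀ k j : Fin n, 0 ≤ A i k j) ∧
      (∀ k : Fin n, ∀ j : Fin m, 0 ≤ B k j) := by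
  have hP : IsPositiveDelaySystem hd A B := hpos
  exact ⟨fun k j hkj => hP.coeff_nonneg hd0 hdmono fun _ => hkj,
    fun i hi k j => hP.coeff_nonneg hd0 hdmono fun h => absurd h hi,
    hP.input_nonneg hd0 hdmono⟩
end
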